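/- Let A be a real symmetric n×n matrix and P a semi-orthogonal n×k matrix with PᵀP = Iₖ. Then tr(PᵀAP) equals the sum of the k eigenvalues of PᵀAP (with multiplicity), and consequently λ₁+⋯+λₖ ≤ tr(PᵀAP) ≤ λ_{n−k+1}+⋯+λₙ, where λ₁ ≤ ⋯ ≤ λₙ are the eigenvalues of A. -/

import Mathlib

/-!
Diagonalise `A = U diag(λ) Uᵀ`. Then `tr(PᵀAP) = ∑ⱼ λⱼ tⱼ`, where the weights `tⱼ` are the diagonal
entries of the orthogonal projection `Uᵀ (P Pᵀ) U`; hence `0 ≤ tⱼ ≤ 1` and `∑ⱼ tⱼ = k`. Over all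
such weights, `∑ⱼ λⱼ tⱼ` is smallest when the weight `1` sits on the `k` smallest eigenvalues and
largest when it sits on the `k` largest ones: compare both sides with a threshold `c` separating
the chosen eigenvalues from the others.
-/

open Matrix Finset

theorem Finset.sum_le_sum_mul_of_forall_le {ι : Type*} [Fintype ι] [DecidableEq ι]
    (S : Finset ι) {f t : ι → ℝ} (hf : ∀ i ∈ S, ∀ j ∉ S, f i ≤ f j)
    (ht : ∀ i, t i ∈ Set.Icc 0 1) (hsum : ∑ i, t i = #S) :
    ∑ i ∈ S, f i ≤ ∑ i, f i * t i := by
  obtain ⟨c, hle_c, hc_le⟩ : ∃ c, (∀ i ∈ S, f i ≤ c) ∧ ∀ j ∉ S, c ≤ f j := by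
    rcases S.eq_empty_or_nonempty with rfl | hS
    · obtain ⟨c, hc⟩ := Finite.exists_ge f
      exact ⟨c, by simp, fun j _ => hc j⟩
    · exact ⟨S.sup' hS f, fun i hi => S.le_sup' f hi,
        fun j hj => S.sup'_le hS f fun i hi => hf i hi j hj⟩
  have hgap : ∑ i, f i * t i - ∑ i ∈ S, f i =
      ∑ i ∈ S, (c - f i) * (1 - t i) + ∑ i ∈ Sᶜ, (f i - c) * t i := by
    rw [← S.sum_add_sum_compl t] at hsum
    rw [← S.sum_add_sum_compl (fun i => f i * t i)]
    simp only [mul_sub, sub_mul, mul_one, sum_sub_distrib, ← mul_sum, sum_const, nsmul_eq_mul]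
    linear_combination c * hsum
  have hin : 0 ≤ ∑ i ∈ S, (c - f i) * (1 - t i) :=
    sum_nonneg fun i hi => mul_nonneg (sub_nonneg.2 (hle_c i hi)) (sub_nonneg.2 (ht i).2)
  have hout : 0 ≤ ∑ i ∈ Sᶜ, (f i - c) * t i :=
    sum_nonneg fun i hi => mul_nonneg (sub_nonneg.2 (hc_le i (mem_compl.1 hi))) (ht i).1
  linarith

theorem Finset.sum_mul_le_sum_of_forall_le {ι : Type*} [Fintype ι] [DecidableEq ι]
    (S : Finset ι) {f t : ι → ℝ} (hf : ∀ i ∈ S, ∀ j ∉ S, f j ≤ f i)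
    (ht : ∀ i, t i ∈ Set.Icc 0 1) (hsum : ∑ i, t i = #S) :
    ∑ i, f i * t i ≤ ∑ i ∈ S, f i := by
  have := S.sum_le_sum_mul_of_forall_le (f := -f) (fun i hi j hj => neg_le_neg (hf i hi j hj))
    ht hsum
  simpa [neg_mul] using this

theorem Matrix.IsHermitian.diag_mem_Icc_of_mul_self_eq {m : Type*} [Fintype m]
    {M : Matrix m m ℝ} (hM : M.IsHermitian) (hMM : M * M = M) (j : m) :
    M j j ∈ Set.Icc 0 1 := by
  have hsq : M j j = ∑ l, M j l ^ 2 := by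
    conv_lhs => rw [← hMM, mul_apply]
    refine sum_congr rfl fun l _ => ?_
    rw [← hM.apply l j, star_trivial, sq]
  have hnonneg : 0 ≤ M j j := hsq ▸ sum_nonneg fun l _ => sq_nonneg _
  have hle : M j j ^ 2 ≤ M j j :=
    hsq ▸ single_le_sum (fun l _ => sq_nonneg (M j l)) (mem_univ j)
  exact ⟨hnonneg, by nlinarith⟩

theorem Matrix.IsHermitian.exists_trace_transpose_mul_mul_eq_sum {m κ : Type*} [Fintype m]
    [DecidableEq m] [Fintype κ] [DecidableEq κ] {A : Matrix m m ℝ} (hA : A.IsHermitian)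
    {P : Matrix m κ ℝ} (hP : Pᵀ * P = 1) :
    ∃ t : m → ℝ, (∀ j, t j ∈ Set.Icc 0 1) ∧ ∑ j, t j = Fintype.card κ ∧
      (Pᵀ * A * P).trace = ∑ j, hA.eigenvalues j * t j := by
  set U : Matrix m m ℝ := (hA.eigenvectorUnitary : Matrix m m ℝ)
  have hUU : U * star U = 1 := mem_unitaryGroup_iff.mp hA.eigenvectorUnitary.2
  set Q := P * Pᵀ
  have hQ : Q.IsHermitian := by
    simpa [Q, conjTranspose_eq_transpose_of_trivial] using isHermitian_mul_conjTranspose_self P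
  have hQQ : Q * Q = Q := by
    simp only [Q, Matrix.mul_assoc, ← Matrix.mul_assoc Pᵀ, hP, Matrix.one_mul]
  set M := star U * Q * U
  have hM : M.IsHermitian := by
    simpa [M, star_eq_conjTranspose] using isHermitian_conjTranspose_mul_mul U hQ
  have hMM : M * M = M := by
    calc M * M = star U * (Q * (U * star U) * Q) * U := by simp only [M, Matrix.mul_assoc]
      _ = M := by rw [hUU, Matrix.mul_one, hQQ]
  refine ⟨fun j => M j j, hM.diag_mem_Icc_of_mul_self_eq hMM, ?_, ?_⟩
  · calc ∑ j, M j j = (Pᵀ * P).trace := by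
          change M.trace = _
          rw [trace_mul_cycle, hUU, Matrix.one_mul, trace_mul_comm]
      _ = Fintype.card κ := by simp [hP]
  · have hA' : A = U * diagonal hA.eigenvalues * star U := by
      simpa using hA.spectral_theorem
    calc (Pᵀ * A * P).trace = (A * Q).trace := by
          rw [Matrix.mul_assoc, trace_mul_comm, ← Matrix.mul_assoc]
      _ = (diagonal hA.eigenvalues * M).trace := by
          conv_lhs => rw [hA', trace_mul_cycle, trace_mul_cycle]
          rw [trace_mul_comm (diagonal _)]
          simp only [M, Matrix.mul_assoc]
      _ = ∑ j, hA.eigenvalues j * M j j := by simp [trace, diagonal_mul]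

theorem Monotone.sum_bot_le_sum_mul {n k : ℕ} (hkn : k ≤ n) {lam t : Fin n → ℝ}
    (hlam : Monotone lam) (ht : ∀ j, t j ∈ Set.Icc 0 1) (hsum : ∑ j, t j = k) :
    ∑ i : Fin k, lam (Fin.castLE hkn i) ≤ ∑ j, lam j * t j := by
  have hsep : ∀ i ∈ univ.map (Fin.castLEEmb hkn), ∀ j ∉ univ.map (Fin.castLEEmb hkn),
      lam i ≤ lam j := by
    simp only [mem_map, mem_univ, true_and, Fin.coe_castLEEmb, not_exists]
    rintro _ ⟨i, rfl⟩ j hj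
    have hjk : k ≤ j := by
      by_contra! hjk
      exact hj ⟨j, hjk⟩ rfl
    exact hlam (Fin.le_def.2 (by simp only [Fin.val_castLE]; omega))
  simpa using sum_le_sum_mul_of_forall_le _ hsep ht (by simpa using hsum)

theorem Monotone.sum_mul_le_sum_top {n k : ℕ} (hkn : k ≤ n) {lam t : Fin n → ℝ}
    (hlam : Monotone lam) (ht : ∀ j, t j ∈ Set.Icc 0 1) (hsum : ∑ j, t j = k) :
    ∑ j, lam j * t j ≤ ∑ i : Fin k, lam ⟨n - k + i, by omega⟩ := by
  let e : Fin k ↪ Fin n := ⟨fun i => ⟨n - k + i, by omega⟩,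
    fun i i' h => Fin.ext (by simpa using congrArg Fin.val h)⟩
  have hsep : ∀ i ∈ univ.map e, ∀ j ∉ univ.map e, lam j ≤ lam i := by
    simp only [mem_map, mem_univ, true_and, not_exists]
    rintro _ ⟨i, rfl⟩ j hj
    refine hlam (Fin.le_def.2 (le_trans ?_ (Nat.le_add_right _ _)))
    by_contra! hjk
    exact hj ⟨j - (n - k), by omega⟩ (Fin.ext (show n - k + (j - (n - k)) = j by omega))
  have := sum_mul_le_sum_of_forall_le _ hsep ht (by simpa using hsum)
  rwa [sum_map] at this

/-- `tr(PᵀAP)` is the sum of the eigenvalues of `PᵀAP`, and it is bounded below by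
the sum of the `k` smallest and above by the sum of the `k` largest eigenvalues
of `A`. -/
theorem trace_coarse_bounds {n k : ℕ} (hkn : k ≤ n)
    (A : Matrix (Fin n) (Fin n) ℝ) (hA : A.IsHermitian)
    (P : Matrix (Fin n) (Fin k) ℝ) (hP : Pᵀ * P = 1)
    (hB : (Pᵀ * A * P).IsHermitian)
    (lam : Fin n → ℝ) (hlam : Monotone lam)
    (hlamA : ∃ e : Equiv.Perm (Fin n), lam = hA.eigenvalues ∘ e) :
    (Pᵀ * A * P).trace = (∑ j, hB.eigenvalues j) ∧
      (∑ i : Fin k, lam (Fin.castLE hkn i)) ≤ (Pᵀ * A * P).trace ∧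
      (Pᵀ * A * P).trace ≤ ∑ i : Fin k, lam ⟨n - k + i, by have := i.isLt; omega⟩ := by
  obtain ⟨e, rfl⟩ := hlamA
  obtain ⟨t, ht, hsum, htrace⟩ := hA.exists_trace_transpose_mul_mul_eq_sum hP
  have hsum' : ∑ j, t (e j) = k := by simpa [Equiv.sum_comp e t] using hsum
  have htrace' : (Pᵀ * A * P).trace = ∑ j, (hA.eigenvalues ∘ e) j * t (e j) := by
    rw [htrace]
    exact (Equiv.sum_comp e fun j => hA.eigenvalues j * t j).symm
  refine ⟨by simpa using hB.trace_eq_sum_eigenvalues, ?_, ?_⟩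
  · exact htrace' ▸ hlam.sum_bot_le_sum_mul hkn (fun j => ht (e j)) hsum'
  · exact htrace' ▸ hlam.sum_mul_le_sum_top hkn (fun j => ht (e j)) hsum'
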